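/- arXiv:1712.10299 — 2 statements merged into one kernel-verified Lean document; each statement's English description precedes it below -/
import Mathlib

section
/- Let Ω be a finite set, let q be a probability mass function on Ω, and let {p_n}_{n∈ℕ} be a sequence of probability mass functions with p_n on Ω^n and p_n absolutely continuous with respect to the product measure q^n for every n. Then D(p_n ‖ q^n) ∈ O([n + log(1/‖p_n − q^n‖_TV)] · ‖p_n − q^n‖_TV); that is, there exists a constant M > 0 such that for all sufficiently large n, D(p_n ‖ q^n) ≤ M (n · ‖p_n − q^n‖_TV − ‖p_n − q^n‖_TV · log ‖p_n − q^n‖_TV) (with the convention 0·log 0 = 0). -/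
open scoped BigOperators

/-- Total variation distance between two PMFs on a finite set:
`‖p − q‖_TV = (1/2) Σ_x |p x − q x|`. -/
noncomputable def tvDist {Ω : Type*} [Fintype Ω] (p q : Ω → ℝ) : ℝ :=
  (1 / 2) * ∑ x, |p x - q x|

/-- `p` is a probability mass function on the finite set `Ω`. -/
def IsPMF {Ω : Type*} [Fintype Ω] (p : Ω → ℝ) : Prop := (∀ x, 0 ≤ p x) ∧ ∑ x, p x = 1

/-- Relative entropy `D(p‖q) = Σ_{x : p x > 0} p x * log (p x / q x)`. -/
noncomputable def relEnt {Ω : Type*} [Fintype Ω] (p q : Ω → ℝ) : ℝ :=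
  ∑ x, if 0 < p x then p x * Real.log (p x / q x) else 0

/-- The `n`-fold product PMF `q^n` on `Ω^n`. -/
noncomputable def prodPMF {Ω : Type*} [Fintype Ω] (q : Ω → ℝ) (n : ℕ) :
    (Fin n → Ω) → ℝ := fun x => ∏ i, q (x i)

/-- Pointwise reverse-Pinsker inequality. -/
lemma pointwise_bound (a b : ℝ) (ha : 0 ≤ a) (ha1 : a ≤ 1) (hb : 0 < b) :
    (if 0 < a then a * Real.log (a / b) else 0) ≤ (Real.log (1 / b) + 1) * max (a - b) 0 := by
  rcases le_or_gt a b with hab | hab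
  · rw [max_eq_right (by linarith)]
    split_ifs with h
    · have h1 : a / b ≤ 1 := (div_le_one hb).2 hab
      have h2 : Real.log (a / b) ≤ 0 := Real.log_nonpos (by positivity) h1
      nlinarith
    · simp
  · have ha0 : 0 < a := lt_trans hb hab
    rw [if_pos ha0, max_eq_left (by linarith)]
    have h1 : Real.log (a / b) ≤ Real.log (1 / b) :=
      Real.log_le_log (by positivity) (by gcongr)
    have h2 : Real.log (a / b) ≤ a / b - 1 := Real.log_le_sub_one_of_pos (by positivity)
    have h3 : b * (a / b) = a := mul_div_cancel₀ a (ne_of_gt hb)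
    nlinarith [mul_le_mul_of_nonneg_left h1 (le_of_lt (sub_pos.2 hab)),
      mul_le_mul_of_nonneg_left h2 (le_of_lt hb)]

/-- **Asymptotic relation between total variation and relative entropy.**
Let `Ω` be finite, `q` a PMF on `Ω`, and `p_n` a PMF on `Ω^n` with `p_n ≪ q^n` for every `n`.
Then `D(p_n‖q^n) ∈ O([n + log(1/‖p_n − q^n‖_TV)] ‖p_n − q^n‖_TV)`: there is a constant
`M > 0` such that for all sufficiently large `n`,
`D(p_n‖q^n) ≤ M (n ‖p_n − q^n‖_TV − ‖p_n − q^n‖_TV log ‖p_n − q^n‖_TV)`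
(with the convention `0 · log 0 = 0`, which holds since `Real.log 0 = 0`). -/
theorem relEnt_bigO_of_tv
    {Ω : Type*} [Fintype Ω] (q : Ω → ℝ) (hq : IsPMF q)
    (p : (n : ℕ) → (Fin n → Ω) → ℝ) (hp : ∀ n, IsPMF (p n))
    (hac : ∀ n x, prodPMF q n x = 0 → p n x = 0) :
    ∃ M > (0 : ℝ), ∃ N : ℕ, ∀ n ≥ N,
      relEnt (p n) (prodPMF q n) ≤
        M * ((n : ℝ) * tvDist (p n) (prodPMF q n)
          - tvDist (p n) (prodPMF q n) * Real.log (tvDist (p n) (prodPMF q n))) := by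
  classical
  -- minimum positive value of q
  obtain ⟨x₀, hx₀⟩ : ∃ x, 0 < q x := by
    by_contra h
    push_neg at h
    have : (∑ x, q x) ≤ 0 := Finset.sum_nonpos (fun x _ => h x)
    rw [hq.2] at this; linarith
  have hsne : (Finset.univ.filter (fun x => 0 < q x)).Nonempty :=
    ⟨x₀, by simp [hx₀]⟩
  obtain ⟨x₁, hx₁, hmin⟩ := Finset.exists_min_image _ q hsne
  set c := q x₁ with hc
  have hc0 : 0 < c := (Finset.mem_filter.1 hx₁).2
  have hc1 : c ≤ 1 := by
    have := Finset.single_le_sum (f := q) (fun x _ => hq.1 x) (Finset.mem_univ x₁)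
    rw [hq.2] at this; exact this
  have hcle : ∀ x, 0 < q x → c ≤ q x := fun x hx =>
    hmin x (Finset.mem_filter.2 ⟨Finset.mem_univ x, hx⟩)
  set L := Real.log (1 / c) with hL
  have hL0 : 0 ≤ L := Real.log_nonneg (by rw [le_div_iff₀ hc0]; linarith)
  refine ⟨2 * (L + 1), by linarith, 1, fun n hn => ?_⟩
  set b := prodPMF q n with hbdef
  set δ := tvDist (p n) b with hδ
  have hb0 : ∀ x, 0 ≤ b x := fun x => Finset.prod_nonneg (fun i _ => hq.1 (x i))
  have hbc : ∀ x, b x ≠ 0 → c ^ n ≤ b x := by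
    intro x hx
    have hpos : ∀ i, 0 < q (x i) := by
      intro i
      rcases lt_or_eq_of_le (hq.1 (x i)) with h | h
      · exact h
      · exfalso; exact hx (Finset.prod_eq_zero (Finset.mem_univ i) h.symm)
    calc c ^ n = ∏ _i : Fin n, c := by rw [Finset.prod_const, Finset.card_univ, Fintype.card_fin]
    _ ≤ ∏ i, q (x i) := Finset.prod_le_prod (fun i _ => le_of_lt hc0)
        (fun i _ => hcle _ (hpos i))
    _ = b x := rfl
  have hp0 : ∀ x, 0 ≤ p n x := (hp n).1
  have hp1 : ∀ x, p n x ≤ 1 := by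
    intro x
    have := Finset.single_le_sum (f := p n) (fun y _ => hp0 y) (Finset.mem_univ x)
    rw [(hp n).2] at this; exact this
  -- key sum bound
  have key : relEnt (p n) b ≤ ((n : ℝ) * L + 1) * ∑ x, max (p n x - b x) 0 := by
    rw [Finset.mul_sum]
    apply Finset.sum_le_sum
    intro x _
    rcases eq_or_lt_of_le (hb0 x) with hbx | hbx
    · have hpx : p n x = 0 := hac n x hbx.symm
      simp [hpx, ← hbx]
    · have h1 := pointwise_bound (p n x) (b x) (hp0 x) (hp1 x) hbx
      refine h1.trans ?_
      rcases le_or_gt (p n x - b x) 0 with h | h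
      · rw [max_eq_right h]; ring_nf; rfl
      · have hlog : Real.log (1 / b x) ≤ (n : ℝ) * L := by
          have h2 : c ^ n ≤ b x := hbc x (ne_of_gt hbx)
          have h3 : Real.log (c ^ n) ≤ Real.log (b x) :=
            Real.log_le_log (by positivity) h2
          rw [Real.log_pow] at h3
          have : Real.log (1 / b x) = - Real.log (b x) := by
            rw [one_div, Real.log_inv]
          rw [this, hL, one_div, Real.log_inv]
          push_cast
          nlinarith
        have hmx : (0 : ℝ) ≤ max (p n x - b x) 0 := le_max_right _ _
        nlinarith
  have hmaxabs : ∑ x, max (p n x - b x) 0 ≤ 2 * δ := by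
    have : ∑ x, max (p n x - b x) 0 ≤ ∑ x, |p n x - b x| :=
      Finset.sum_le_sum (fun x _ => max_le (le_abs_self _) (abs_nonneg _))
    rw [hδ]; unfold tvDist; linarith
  have hδ0 : 0 ≤ δ := by
    rw [hδ]; unfold tvDist
    have : (0:ℝ) ≤ ∑ x, |p n x - prodPMF q n x| :=
      Finset.sum_nonneg (fun x _ => abs_nonneg _)
    linarith
  have hsumb : ∑ x, b x = 1 := by
    rw [hbdef]
    unfold prodPMF
    rw [← Fintype.piFinset_univ, ← Finset.prod_univ_sum (fun _ => Finset.univ) (fun _ y => q y)]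
    rw [Finset.prod_congr rfl (fun i _ => hq.2), Finset.prod_const, one_pow]
  have hδ1 : δ ≤ 1 := by
    rw [hδ]; unfold tvDist
    have h1 : ∑ x, |p n x - b x| ≤ ∑ x, (p n x + b x) :=
      Finset.sum_le_sum (fun x _ => (abs_sub _ _).trans (by
        rw [abs_of_nonneg (hp0 x), abs_of_nonneg (hb0 x)]))
    rw [Finset.sum_add_distrib, (hp n).2, hsumb] at h1
    linarith
  have hlogδ : δ * Real.log δ ≤ 0 := by
    rcases eq_or_lt_of_le hδ0 with h | h
    · rw [← h]; simp
    · have := Real.log_nonpos (le_of_lt h) hδ1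
      nlinarith
  have hsum0 : 0 ≤ ∑ x, max (p n x - b x) 0 :=
    Finset.sum_nonneg (fun x _ => le_max_right _ _)
  have hn1 : (1 : ℝ) ≤ (n : ℝ) := by exact_mod_cast hn
  have hfinal : relEnt (p n) b ≤ 2 * (L + 1) * ((n : ℝ) * δ) := by
    have h1 : ((n : ℝ) * L + 1) * ∑ x, max (p n x - b x) 0 ≤ ((n : ℝ) * L + 1) * (2 * δ) :=
      mul_le_mul_of_nonneg_left hmaxabs (by nlinarith)
    have h2 : ((n : ℝ) * L + 1) * (2 * δ) ≤ 2 * (L + 1) * ((n : ℝ) * δ) := by nlinarith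
    linarith [key]
  calc relEnt (p n) b ≤ 2 * (L + 1) * ((n : ℝ) * δ) := hfinal
    _ ≤ 2 * (L + 1) * ((n : ℝ) * δ - δ * Real.log δ) := by nlinarith
end

section
/- Let X and Y be finite sets, let {μ_n}_{n∈ℕ} and {ν_n}_{n∈ℕ} be sequences of probability mass functions on X^n × Y^n, and let {ε_n}_{n∈ℕ} be a sequence of nonnegative reals with ε_n → 0 such that ‖μ_n − ν_n‖_TV ≤ ε_n for all n. Then there exists n₀ ∈ ℕ such that for all n > n₀, |I_{μ_n}(X^n; Y^n) − I_{ν_n}(X^n; Y^n)| ≤ 2 n ε_n (log|X| + log|Y|) − 3 ε_n log ε_n (with the convention 0·log 0 = 0). -/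
open scoped BigOperators

/-- First marginal of a joint PMF on `A × B`. -/
noncomputable def margFst {A B : Type*} [Fintype A] [Fintype B] (μ : A × B → ℝ) : A → ℝ :=
  fun a => ∑ b, μ (a, b)

/-- Second marginal of a joint PMF on `A × B`. -/
noncomputable def margSnd {A B : Type*} [Fintype A] [Fintype B] (μ : A × B → ℝ) : B → ℝ :=
  fun b => ∑ a, μ (a, b)

/-- Mutual information of a joint PMF `μ` on `A × B`:
`I_μ(A;B) = D(μ ‖ μ_A ⊗ μ_B)`. -/
noncomputable def mutInf {A B : Type*} [Fintype A] [Fintype B] (μ : A × B → ℝ) : ℝ :=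
  relEnt μ (fun ab => margFst μ ab.1 * margSnd μ ab.2)


section AuxTVMI
open Real Finset
section
variable {Ω : Type*} [Fintype Ω]
noncomputable def ent (p : Ω → ℝ) : ℝ := ∑ x, Real.negMulLog (p x)

lemma tv_nonneg (p q : Ω → ℝ) : 0 ≤ tvDist p q := by
  unfold tvDist
  have : (0:ℝ) ≤ ∑ x, |p x - q x| := Finset.sum_nonneg fun x _ => abs_nonneg _
  linarith

lemma tv_le_one {p q : Ω → ℝ} (hp : IsPMF p) (hq : IsPMF q) : tvDist p q ≤ 1 := by
  unfold tvDist
  have : ∑ x, |p x - q x| ≤ ∑ x, (p x + q x) := by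
    refine Finset.sum_le_sum fun x _ => ?_
    have := abs_sub_abs_le_abs_sub (p x) (q x)
    calc |p x - q x| ≤ |p x| + |q x| := abs_sub _ _
      _ = p x + q x := by rw [abs_of_nonneg (hp.1 x), abs_of_nonneg (hq.1 x)]
  rw [Finset.sum_add_distrib, hp.2, hq.2] at this
  linarith

lemma eq_of_tv_eq_zero {p q : Ω → ℝ} (h : tvDist p q = 0) : p = q := by
  unfold tvDist at h
  have h2 : ∑ x, |p x - q x| = 0 := by linarith
  funext x
  have := (Finset.sum_eq_zero_iff_of_nonneg (fun x _ => abs_nonneg (p x - q x))).1 h2 x (Finset.mem_univ x)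
  have := abs_eq_zero.1 this
  linarith

lemma mix_isPMF {p q : Ω → ℝ} (hp : IsPMF p) (hq : IsPMF q) {a b : ℝ}
    (ha : 0 ≤ a) (hb : 0 ≤ b) (hab : a + b = 1) : IsPMF (fun x => a * p x + b * q x) := by
  constructor
  · intro x; have := hp.1 x; have := hq.1 x; positivity
  · rw [Finset.sum_add_distrib, ← Finset.mul_sum, ← Finset.mul_sum, hp.2, hq.2]; linarith

lemma pmf_le_one {p : Ω → ℝ} (hp : IsPMF p) (x : Ω) : p x ≤ 1 := by
  rw [← hp.2]
  exact Finset.single_le_sum (fun i _ => hp.1 i) (Finset.mem_univ x)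

lemma ent_nonneg {p : Ω → ℝ} (hp : IsPMF p) : 0 ≤ ent p :=
  Finset.sum_nonneg fun x _ => Real.negMulLog_nonneg (hp.1 x) (pmf_le_one hp x)


lemma ent_le_log_card {p : Ω → ℝ} (hp : IsPMF p) : ent p ≤ Real.log (Fintype.card Ω) := by
  have hne : Nonempty Ω := by
    by_contra h
    rw [not_nonempty_iff] at h
    have : ∑ x, p x = 0 := by simp
    rw [hp.2] at this; norm_num at this
  have hd : (0:ℝ) < (Fintype.card Ω : ℝ) := by
    have := Fintype.card_pos_iff.2 hne
    exact_mod_cast this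
  set d : ℝ := (Fintype.card Ω : ℝ) with hdd
  have key : ∀ x, Real.negMulLog (p x) - p x * Real.log d ≤ 1 / d - p x := by
    intro x
    rcases eq_or_lt_of_le (hp.1 x) with h0 | h0
    · rw [← h0]; simp; positivity
    · have h1 : Real.log (1 / (p x * d)) ≤ 1 / (p x * d) - 1 :=
        Real.log_le_sub_one_of_pos (by positivity)
      have h2 : Real.log (1 / (p x * d)) = - Real.log (p x) - Real.log d := by
        rw [one_div, Real.log_inv, Real.log_mul (ne_of_gt h0) (ne_of_gt hd)]; ring
      have h3 : p x * Real.log (1 / (p x * d)) ≤ p x * (1 / (p x * d) - 1) :=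
        mul_le_mul_of_nonneg_left h1 (le_of_lt h0)
      rw [h2] at h3
      have h4 : p x * (1 / (p x * d) - 1) = 1 / d - p x := by field_simp
      rw [h4] at h3
      simp only [Real.negMulLog]
      nlinarith
  have hsum : ∑ x, (Real.negMulLog (p x) - p x * Real.log d) ≤ ∑ x : Ω, (1 / d - p x) := by
    exact Finset.sum_le_sum fun x _ => key x
  rw [Finset.sum_sub_distrib, Finset.sum_sub_distrib, ← Finset.sum_mul, hp.2] at hsum
  simp only [Finset.sum_const, Finset.card_univ, nsmul_eq_mul] at hsum
  have : (Fintype.card Ω : ℝ) * (1 / d) = 1 := by rw [← hdd]; field_simp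
  rw [this] at hsum
  unfold ent
  linarith

lemma nml_concave_pt {x y a b : ℝ} (hx : 0 ≤ x) (hy : 0 ≤ y) (ha : 0 ≤ a) (hb : 0 ≤ b)
    (hab : a + b = 1) :
    a * Real.negMulLog x + b * Real.negMulLog y ≤ Real.negMulLog (a * x + b * y) := by
  have := Real.concaveOn_negMulLog.2 (Set.mem_Ici.2 hx) (Set.mem_Ici.2 hy) ha hb hab
  simpa using this

lemma ent_mix_ge {p q : Ω → ℝ} (hp : IsPMF p) (hq : IsPMF q) {a b : ℝ}
    (ha : 0 ≤ a) (hb : 0 ≤ b) (hab : a + b = 1) :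
    a * ent p + b * ent q ≤ ent (fun x => a * p x + b * q x) := by
  unfold ent
  rw [Finset.mul_sum, Finset.mul_sum, ← Finset.sum_add_distrib]
  exact Finset.sum_le_sum fun x _ => nml_concave_pt (hp.1 x) (hq.1 x) ha hb hab

lemma nml_subadd {s t : ℝ} (hs : 0 ≤ s) (ht : 0 ≤ t) :
    Real.negMulLog (s + t) ≤ Real.negMulLog s + Real.negMulLog t := by
  simp only [Real.negMulLog, neg_mul]
  have h1 : s * Real.log s ≤ s * Real.log (s + t) := by
    rcases eq_or_lt_of_le hs with h | h
    · rw [← h]; simp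
    · exact mul_le_mul_of_nonneg_left (Real.log_le_log (by linarith) (by linarith)) hs
  have h2 : t * Real.log t ≤ t * Real.log (s + t) := by
    rcases eq_or_lt_of_le ht with h | h
    · rw [← h]; simp
    · exact mul_le_mul_of_nonneg_left (Real.log_le_log (by linarith) (by linarith)) ht
  nlinarith [add_mul s t (Real.log (s + t))]

lemma ent_mix_le {p q : Ω → ℝ} (hp : IsPMF p) (hq : IsPMF q) {a b : ℝ}
    (ha : 0 ≤ a) (hb : 0 ≤ b) (hab : a + b = 1) :
    ent (fun x => a * p x + b * q x) ≤
      a * ent p + b * ent q + (Real.negMulLog a + Real.negMulLog b) := by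
  unfold ent
  have key : ∀ x, Real.negMulLog (a * p x + b * q x) ≤
      (a * Real.negMulLog (p x) + p x * Real.negMulLog a)
      + (b * Real.negMulLog (q x) + q x * Real.negMulLog b) := by
    intro x
    calc Real.negMulLog (a * p x + b * q x)
        ≤ Real.negMulLog (a * p x) + Real.negMulLog (b * q x) :=
          nml_subadd (by have := hp.1 x; positivity) (by have := hq.1 x; positivity)
      _ = (a * Real.negMulLog (p x) + p x * Real.negMulLog a)
          + (b * Real.negMulLog (q x) + q x * Real.negMulLog b) := by
          rw [Real.negMulLog_mul, Real.negMulLog_mul]; ring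
  calc ∑ x, Real.negMulLog (a * p x + b * q x)
      ≤ ∑ x, ((a * Real.negMulLog (p x) + p x * Real.negMulLog a)
          + (b * Real.negMulLog (q x) + q x * Real.negMulLog b)) :=
        Finset.sum_le_sum fun x _ => key x
    _ = a * ∑ x, Real.negMulLog (p x) + b * ∑ x, Real.negMulLog (q x)
        + ((∑ x, p x) * Real.negMulLog a + (∑ x, q x) * Real.negMulLog b) := by
        rw [Finset.sum_add_distrib, Finset.sum_add_distrib, Finset.sum_add_distrib,
          ← Finset.mul_sum, ← Finset.mul_sum, ← Finset.sum_mul, ← Finset.sum_mul]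
        ring
    _ = _ := by rw [hp.2, hq.2]; ring


lemma pmf_nonempty {p : Ω → ℝ} (hp : IsPMF p) : Nonempty Ω := by
  by_contra h
  rw [not_nonempty_iff] at h
  have : ∑ x, p x = 0 := by simp
  rw [hp.2] at this; norm_num at this
end

noncomputable def Dxy (x y : ℝ) : ℝ := x * Real.log x - x * Real.log y

lemma Dxy_zero_left (y : ℝ) : Dxy 0 y = 0 := by simp [Dxy]

lemma Dxy_add {u w v z : ℝ} (hu : 0 ≤ u) (huw : u ≤ w) (hv : 0 ≤ v) (hvz : v ≤ z) :
    Dxy (u + v) (w + z) ≤ Dxy u w + Dxy v z := by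
  have hw : 0 ≤ w := le_trans hu huw
  have hz : 0 ≤ z := le_trans hv hvz
  rcases eq_or_lt_of_le hw with hw0 | hw0
  · -- w = 0, so u = 0
    have hu0 : u = 0 := le_antisymm (hw0 ▸ huw) hu
    rw [hu0, ← hw0, Dxy_zero_left, zero_add, zero_add, zero_add]
  rcases eq_or_lt_of_le hz with hz0 | hz0
  · have hv0 : v = 0 := le_antisymm (hz0 ▸ hvz) hv
    rw [hv0, ← hz0, Dxy_zero_left, add_zero, add_zero, add_zero]
  -- now w, z > 0
  have hwz : 0 < w + z := by linarith
  have hj := Real.convexOn_mul_log.2 (Set.mem_Ici.2 (by positivity : (0:ℝ) ≤ u / w))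
    (Set.mem_Ici.2 (by positivity : (0:ℝ) ≤ v / z))
    (by positivity : (0:ℝ) ≤ w / (w + z)) (by positivity : (0:ℝ) ≤ z / (w + z))
    (by field_simp)
  simp only [smul_eq_mul] at hj
  have harg : w / (w + z) * (u / w) + z / (w + z) * (v / z) = (u + v) / (w + z) := by
    field_simp
  rw [harg] at hj
  have hj2 : (u + v) / (w + z) * Real.log ((u + v) / (w + z)) ≤
      (w / (w + z)) * (u / w * Real.log (u / w)) + (z / (w + z)) * (v / z * Real.log (v / z)) := hj
  have hj3 : (u + v) * Real.log ((u + v) / (w + z)) ≤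
      u * Real.log (u / w) + v * Real.log (v / z) := by
    have := mul_le_mul_of_nonneg_left hj2 (le_of_lt hwz)
    calc (u + v) * Real.log ((u + v) / (w + z))
        = (w + z) * ((u + v) / (w + z) * Real.log ((u + v) / (w + z))) := by field_simp
      _ ≤ (w + z) * ((w / (w + z)) * (u / w * Real.log (u / w))
            + (z / (w + z)) * (v / z * Real.log (v / z))) := this
      _ = u * Real.log (u / w) + v * Real.log (v / z) := by field_simp
  -- convert to Dxy
  have e1 : u * Real.log (u / w) = Dxy u w := by
    rcases eq_or_lt_of_le hu with h | h
    · rw [← h]; simp [Dxy]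
    · rw [Real.log_div (ne_of_gt h) (ne_of_gt hw0), Dxy]; ring
  have e2 : v * Real.log (v / z) = Dxy v z := by
    rcases eq_or_lt_of_le hv with h | h
    · rw [← h]; simp [Dxy]
    · rw [Real.log_div (ne_of_gt h) (ne_of_gt hz0), Dxy]; ring
  have e3 : (u + v) * Real.log ((u + v) / (w + z)) = Dxy (u + v) (w + z) := by
    rcases eq_or_lt_of_le (by linarith : (0:ℝ) ≤ u + v) with h | h
    · rw [← h]; simp [Dxy]
    · rw [Real.log_div (ne_of_gt h) (ne_of_gt hwz), Dxy]; ring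
  rw [e1, e2, e3] at hj3
  exact hj3

lemma Dxy_smul {a x y : ℝ} (ha : 0 ≤ a) (hx : 0 ≤ x) (hxy : x ≤ y) :
    Dxy (a * x) (a * y) = a * Dxy x y := by
  rcases eq_or_lt_of_le ha with ha0 | ha0
  · rw [← ha0]; simp [Dxy]
  rcases eq_or_lt_of_le hx with hx0 | hx0
  · rw [← hx0]; simp [Dxy]
  have hy : 0 < y := lt_of_lt_of_le hx0 hxy
  rw [Dxy, Dxy, Real.log_mul (ne_of_gt ha0) (ne_of_gt hx0),
    Real.log_mul (ne_of_gt ha0) (ne_of_gt hy)]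
  ring


section
variable {A B : Type*} [Fintype A] [Fintype B]

noncomputable def condEnt (μ : A × B → ℝ) : ℝ := ent μ - ent (margFst μ)

lemma margFst_nonneg {μ : A × B → ℝ} (hμ : ∀ x, 0 ≤ μ x) (a : A) : 0 ≤ margFst μ a :=
  Finset.sum_nonneg fun b _ => hμ (a, b)

lemma le_margFst {μ : A × B → ℝ} (hμ : ∀ x, 0 ≤ μ x) (a : A) (b : B) :
    μ (a, b) ≤ margFst μ a :=
  Finset.single_le_sum (fun b _ => hμ (a, b)) (Finset.mem_univ b)

lemma margFst_isPMF {μ : A × B → ℝ} (hμ : IsPMF μ) : IsPMF (margFst μ) := by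
  constructor
  · exact margFst_nonneg hμ.1
  · rw [← hμ.2, Fintype.sum_prod_type]; rfl

lemma margFst_mix (p q : A × B → ℝ) (a b : ℝ) :
    margFst (fun x => a * p x + b * q x) = fun y => a * margFst p y + b * margFst q y := by
  funext y
  simp only [margFst]
  rw [Finset.sum_add_distrib, ← Finset.mul_sum, ← Finset.mul_sum]

lemma condEnt_eq {μ : A × B → ℝ} :
    condEnt μ = - ∑ ab : A × B, Dxy (μ ab) (margFst μ ab.1) := by
  unfold condEnt ent Dxy
  rw [Fintype.sum_prod_type]
  have h2 : ∑ a, Real.negMulLog (margFst μ a) = ∑ a, ∑ b, (- (μ (a, b) * Real.log (margFst μ a))) := by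
    refine Finset.sum_congr rfl fun a _ => ?_
    have e : ∑ b, (- (μ (a, b) * Real.log (margFst μ a)))
        = - ((∑ b, μ (a, b)) * Real.log (margFst μ a)) := by
      rw [Finset.sum_neg_distrib, Finset.sum_mul]
    rw [e, Real.negMulLog, margFst, neg_mul]
  rw [h2, Fintype.sum_prod_type]
  rw [← Finset.sum_sub_distrib, ← Finset.sum_neg_distrib]
  refine Finset.sum_congr rfl fun a _ => ?_
  rw [← Finset.sum_sub_distrib, ← Finset.sum_neg_distrib]
  refine Finset.sum_congr rfl fun b _ => ?_
  simp [Real.negMulLog]; ring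
end

section
variable {A B : Type*} [Fintype A] [Fintype B]

lemma condEnt_eq' {μ : A × B → ℝ} :
    condEnt μ = ∑ ab : A × B, (Real.negMulLog (μ ab) + μ ab * Real.log (margFst μ ab.1)) := by
  rw [condEnt_eq, ← Finset.sum_neg_distrib]
  refine Finset.sum_congr rfl fun ab _ => ?_
  simp [Dxy, Real.negMulLog]; ring

lemma condEnt_concave {p q : A × B → ℝ} (hp : IsPMF p) (hq : IsPMF q) {a b : ℝ}
    (ha : 0 ≤ a) (hb : 0 ≤ b) :
    a * condEnt p + b * condEnt q ≤ condEnt (fun x => a * p x + b * q x) := by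
  simp only [condEnt_eq, margFst_mix]
  have key : ∀ ab : A × B,
      Dxy (a * p ab + b * q ab) (a * margFst p ab.1 + b * margFst q ab.1)
      ≤ a * Dxy (p ab) (margFst p ab.1) + b * Dxy (q ab) (margFst q ab.1) := by
    intro ab
    obtain ⟨x, y⟩ := ab
    have hple := le_margFst hp.1 x y
    have hqle := le_margFst hq.1 x y
    have h1 := Dxy_add (u := a * p (x, y)) (w := a * margFst p x)
      (v := b * q (x, y)) (z := b * margFst q x)
      (by have := hp.1 (x, y); positivity)
      (mul_le_mul_of_nonneg_left hple ha)
      (by have := hq.1 (x, y); positivity)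
      (mul_le_mul_of_nonneg_left hqle hb)
    rw [Dxy_smul ha (hp.1 (x, y)) hple, Dxy_smul hb (hq.1 (x, y)) hqle] at h1
    exact h1
  have hsum := Finset.sum_le_sum (fun ab (_ : ab ∈ Finset.univ) => key ab)
  rw [Finset.sum_add_distrib, ← Finset.mul_sum, ← Finset.mul_sum] at hsum
  linarith

lemma condEnt_almost_convex {p q : A × B → ℝ} (hp : IsPMF p) (hq : IsPMF q) {a b : ℝ}
    (ha : 0 ≤ a) (hb : 0 ≤ b) (hab : a + b = 1) :
    condEnt (fun x => a * p x + b * q x) ≤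
      a * condEnt p + b * condEnt q + (Real.negMulLog a + Real.negMulLog b) := by
  unfold condEnt
  have h1 := ent_mix_le hp hq ha hb hab
  have h2 := ent_mix_ge (margFst_isPMF hp) (margFst_isPMF hq) ha hb hab
  rw [margFst_mix]
  linarith

lemma condEnt_nonneg {μ : A × B → ℝ} (hμ : IsPMF μ) : 0 ≤ condEnt μ := by
  unfold condEnt ent
  rw [Fintype.sum_prod_type]
  have key : ∀ a, Real.negMulLog (margFst μ a) ≤ ∑ b, Real.negMulLog (μ (a, b)) := by
    intro a
    have e : Real.negMulLog (margFst μ a) = ∑ b, (- (μ (a, b) * Real.log (margFst μ a))) := by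
      rw [Finset.sum_neg_distrib, ← Finset.sum_mul, Real.negMulLog, margFst, neg_mul]
    rw [e]
    refine Finset.sum_le_sum fun b _ => ?_
    rcases eq_or_lt_of_le (hμ.1 (a, b)) with h | h
    · rw [← h]; simp
    · rw [Real.negMulLog, neg_mul]
      have := Real.log_le_log h (le_margFst hμ.1 a b)
      nlinarith
  have := Finset.sum_le_sum (fun a (_ : a ∈ Finset.univ) => key a)
  linarith

lemma condEnt_le_log {μ : A × B → ℝ} (hμ : IsPMF μ) :
    condEnt μ ≤ Real.log (Fintype.card B) := by
  have hne : Nonempty (A × B) := pmf_nonempty hμ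
  have hB : Nonempty B := ⟨hne.some.2⟩
  set c : ℝ := (Fintype.card B : ℝ) with hcdef
  have hc : (0:ℝ) < c := by
    have := Fintype.card_pos_iff.2 hB
    rw [hcdef]; exact_mod_cast this
  have hkey : ∀ ab : A × B, Real.negMulLog (μ ab) + μ ab * Real.log (margFst μ ab.1)
      - μ ab * Real.log c ≤ margFst μ ab.1 / c - μ ab := by
    intro ab
    obtain ⟨x, y⟩ := ab
    have hle := le_margFst hμ.1 x y
    have hs0 : 0 ≤ margFst μ x := margFst_nonneg hμ.1 x
    rcases eq_or_lt_of_le (hμ.1 (x, y)) with h | h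
    · rw [← h]; simp; positivity
    · have hs : 0 < margFst μ x := lt_of_lt_of_le h hle
      have hlog : Real.log (margFst μ x / (μ (x, y) * c))
          ≤ margFst μ x / (μ (x, y) * c) - 1 := Real.log_le_sub_one_of_pos (by positivity)
      have hexp : Real.log (margFst μ x / (μ (x, y) * c))
          = Real.log (margFst μ x) - Real.log (μ (x, y)) - Real.log c := by
        rw [Real.log_div (ne_of_gt hs) (by positivity),
          Real.log_mul (ne_of_gt h) (ne_of_gt hc)]
        ring
      rw [hexp] at hlog
      have := mul_le_mul_of_nonneg_left hlog (le_of_lt h)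
      have he : μ (x, y) * (margFst μ x / (μ (x, y) * c) - 1) = margFst μ x / c - μ (x, y) := by
        field_simp
      rw [he] at this
      rw [Real.negMulLog, neg_mul]
      nlinarith
  have hsum := Finset.sum_le_sum (fun ab (_ : ab ∈ Finset.univ) => hkey ab)
  have hL : ∑ ab : A × B, (Real.negMulLog (μ ab) + μ ab * Real.log (margFst μ ab.1)
      - μ ab * Real.log c) = condEnt μ - Real.log c := by
    rw [Finset.sum_sub_distrib, ← Finset.sum_mul, hμ.2, condEnt_eq', one_mul]
  have hR : ∑ ab : A × B, (margFst μ ab.1 / c - μ ab) = 0 := by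
    rw [Finset.sum_sub_distrib, hμ.2, Fintype.sum_prod_type]
    have : ∀ a, ∑ _b : B, margFst μ a / c = margFst μ a := by
      intro a
      rw [Finset.sum_const, Finset.card_univ, nsmul_eq_mul, hcdef]
      field_simp
    rw [Finset.sum_congr rfl (fun a _ => this a)]
    have : ∑ a, margFst μ a = 1 := (margFst_isPMF hμ).2
    rw [this]; ring
  rw [hL, hR] at hsum
  linarith

end


section
variable {A B : Type*} [Fintype A] [Fintype B]

lemma margSnd_isPMF {μ : A × B → ℝ} (hμ : IsPMF μ) : IsPMF (margSnd μ) := by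
  constructor
  · intro b; exact Finset.sum_nonneg fun a _ => hμ.1 (a, b)
  · rw [← hμ.2, Fintype.sum_prod_type]
    exact Finset.sum_comm.symm

lemma le_margSnd {μ : A × B → ℝ} (hμ : ∀ x, 0 ≤ μ x) (a : A) (b : B) :
    μ (a, b) ≤ margSnd μ b :=
  Finset.single_le_sum (fun a _ => hμ (a, b)) (Finset.mem_univ a)

lemma tv_margSnd_le (p q : A × B → ℝ) : tvDist (margSnd p) (margSnd q) ≤ tvDist p q := by
  unfold tvDist margSnd
  have h : ∀ b, |(∑ a, p (a, b)) - ∑ a, q (a, b)| ≤ ∑ a, |p (a, b) - q (a, b)| := by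
    intro b
    rw [← Finset.sum_sub_distrib]
    exact Finset.abs_sum_le_sum_abs _ _
  have h2 := Finset.sum_le_sum (fun b (_ : b ∈ Finset.univ) => h b)
  have h3 : ∑ x : A × B, |p x - q x| = ∑ b, ∑ a, |p (a, b) - q (a, b)| := by
    rw [Fintype.sum_prod_type]
    exact Finset.sum_comm
  rw [h3]
  linarith

lemma tv_comm (p q : A × B → ℝ) : tvDist q p = tvDist p q := by
  unfold tvDist
  congr 1
  exact Finset.sum_congr rfl fun x _ => abs_sub_comm _ _

lemma tv_comm' {Ω : Type*} [Fintype Ω] (p q : Ω → ℝ) : tvDist q p = tvDist p q := by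
  unfold tvDist
  congr 1
  exact Finset.sum_congr rfl fun x _ => abs_sub_comm _ _

lemma ent_eq_neg {Ω : Type*} [Fintype Ω] (p : Ω → ℝ) :
    ent p = -∑ x, p x * Real.log (p x) := by
  unfold ent
  simp only [Real.negMulLog, neg_mul]
  rw [Finset.sum_neg_distrib]

lemma mutInf_eq {μ : A × B → ℝ} (hμ : IsPMF μ) :
    mutInf μ = ent (margFst μ) + ent (margSnd μ) - ent μ := by
  unfold mutInf relEnt
  have key : ∀ ab : A × B,
      (if 0 < μ ab then μ ab * Real.log (μ ab / (margFst μ ab.1 * margSnd μ ab.2)) else 0)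
      = μ ab * Real.log (μ ab) - μ ab * Real.log (margFst μ ab.1)
        - μ ab * Real.log (margSnd μ ab.2) := by
    intro ab
    rcases eq_or_lt_of_le (hμ.1 ab) with h | h
    · rw [if_neg (by rw [← h]; exact lt_irrefl 0), ← h]; ring
    · have h1 : 0 < margFst μ ab.1 := by
        obtain ⟨x, y⟩ := ab
        exact lt_of_lt_of_le h (le_margFst hμ.1 x y)
      have h2 : 0 < margSnd μ ab.2 := by
        obtain ⟨x, y⟩ := ab
        exact lt_of_lt_of_le h (le_margSnd hμ.1 x y)
      rw [if_pos h, Real.log_div (ne_of_gt h) (by positivity),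
        Real.log_mul (ne_of_gt h1) (ne_of_gt h2)]
      ring
  rw [Finset.sum_congr rfl fun ab _ => key ab]
  have s1 : ∑ ab : A × B, μ ab * Real.log (margFst μ ab.1)
      = ∑ a, margFst μ a * Real.log (margFst μ a) := by
    rw [Fintype.sum_prod_type]
    refine Finset.sum_congr rfl fun a _ => ?_
    show (∑ y, μ (a, y) * Real.log (margFst μ a)) = margFst μ a * Real.log (margFst μ a)
    rw [← Finset.sum_mul]
    rfl
  have s2 : ∑ ab : A × B, μ ab * Real.log (margSnd μ ab.2)
      = ∑ b, margSnd μ b * Real.log (margSnd μ b) := by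
    rw [Fintype.sum_prod_type]
    rw [Finset.sum_comm]
    refine Finset.sum_congr rfl fun b _ => ?_
    show (∑ x, μ (x, b) * Real.log (margSnd μ b)) = margSnd μ b * Real.log (margSnd μ b)
    rw [← Finset.sum_mul]
    rfl
  rw [Finset.sum_sub_distrib, Finset.sum_sub_distrib, s1, s2]
  rw [ent_eq_neg μ, ent_eq_neg (margFst μ), ent_eq_neg (margSnd μ)]
  ring

end

lemma nml_mono {s t : ℝ} (hs : 0 ≤ s) (hst : s ≤ t) (ht : t ≤ Real.exp (-1)) :
    Real.negMulLog s ≤ Real.negMulLog t := by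
  rcases eq_or_lt_of_le hs with h | h
  · rw [← h, Real.negMulLog_zero]
    apply Real.negMulLog_nonneg (by linarith)
    calc t ≤ Real.exp (-1) := ht
      _ ≤ 1 := by
        rw [← Real.exp_zero]
        exact Real.exp_le_exp.2 (by norm_num)
  · have ht0 : 0 < t := lt_of_lt_of_le h hst
    have hlt : Real.log t ≤ -1 := by
      calc Real.log t ≤ Real.log (Real.exp (-1)) := Real.log_le_log ht0 ht
        _ = -1 := Real.log_exp _
    have hdiv : Real.log (t / s) ≤ t / s - 1 := Real.log_le_sub_one_of_pos (by positivity)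
    have hlogdiv : Real.log (t / s) = Real.log t - Real.log s :=
      Real.log_div (ne_of_gt ht0) (ne_of_gt h)
    rw [hlogdiv] at hdiv
    have h2 := mul_le_mul_of_nonneg_left hdiv (le_of_lt h)
    have he : s * (t / s - 1) = t - s := by field_simp
    rw [he] at h2
    simp only [Real.negMulLog, neg_mul]
    nlinarith [mul_le_mul_of_nonneg_left hlt (by linarith : (0:ℝ) ≤ t - s)]

lemma four_le_nml {e : ℝ} (he : 0 ≤ e) (hee : e ≤ Real.exp (-4)) :
    4 * e ≤ Real.negMulLog e := by
  rcases eq_or_lt_of_le he with h | h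
  · rw [← h]; simp
  · have hlog : Real.log e ≤ -4 := by
      calc Real.log e ≤ Real.log (Real.exp (-4)) := Real.log_le_log h hee
        _ = -4 := Real.log_exp _
    rw [Real.negMulLog, neg_mul]
    nlinarith [mul_le_mul_of_nonneg_left hlog (le_of_lt h)]

section
variable {Ω : Type*} [Fintype Ω]

lemma afw_one_sided (f : (Ω → ℝ) → ℝ) (C : ℝ) (hC : 0 ≤ C)
    (hbd : ∀ p : Ω → ℝ, IsPMF p → 0 ≤ f p ∧ f p ≤ C)
    (hconc : ∀ p q : Ω → ℝ, IsPMF p → IsPMF q → ∀ a b : ℝ, 0 ≤ a → 0 ≤ b → a + b = 1 →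
      a * f p + b * f q ≤ f (fun x => a * p x + b * q x))
    (hac : ∀ p q : Ω → ℝ, IsPMF p → IsPMF q → ∀ a b : ℝ, 0 ≤ a → 0 ≤ b → a + b = 1 →
      f (fun x => a * p x + b * q x) ≤ a * f p + b * f q
        + (Real.negMulLog a + Real.negMulLog b))
    (p q : Ω → ℝ) (hp : IsPMF p) (hq : IsPMF q) :
    f p - f q ≤ tvDist p q * C + Real.negMulLog (tvDist p q) + 2 * tvDist p q := by
  have hT0 : 0 ≤ tvDist p q := tv_nonneg p q
  have hT1 : tvDist p q ≤ 1 := tv_le_one hp hq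
  rcases eq_or_lt_of_le hT0 with h0 | h0
  · have hpq : p = q := eq_of_tv_eq_zero h0.symm
    have hfeq : f p = f q := by rw [hpq]
    rw [← h0, hfeq]
    simp
  set T := tvDist p q with hT
  have h1T : (0:ℝ) < 1 + T := by linarith
  set α : Ω → ℝ := fun x => max (p x - q x) 0 / T with hα
  set β : Ω → ℝ := fun x => max (q x - p x) 0 / T with hβ
  have hsumabs : ∑ x, |p x - q x| = 2 * T := by
    rw [hT]; unfold tvDist; ring
  have habs : ∀ x, |p x - q x| = max (p x - q x) 0 + max (q x - p x) 0 := by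
    intro x; rcases le_total (p x) (q x) with h | h
    · rw [abs_of_nonpos (by linarith), max_eq_right (by linarith), max_eq_left (by linarith)]
      ring
    · rw [abs_of_nonneg (by linarith), max_eq_left (by linarith), max_eq_right (by linarith)]
      ring
  have hsumdiff : ∑ x, (max (p x - q x) 0 - max (q x - p x) 0) = 0 := by
    have e : ∀ x, max (p x - q x) 0 - max (q x - p x) 0 = p x - q x := by
      intro x; rcases le_total (p x) (q x) with h | h
      · rw [max_eq_right (by linarith), max_eq_left (by linarith)]; ring
      · rw [max_eq_left (by linarith), max_eq_right (by linarith)]; ring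
    rw [Finset.sum_congr rfl fun x _ => e x, Finset.sum_sub_distrib, hp.2, hq.2]; ring
  have hsum2 : ∑ x, (max (p x - q x) 0 + max (q x - p x) 0) = 2 * T := by
    rw [← hsumabs]
    exact (Finset.sum_congr rfl fun x _ => (habs x)).symm
  rw [Finset.sum_sub_distrib] at hsumdiff
  rw [Finset.sum_add_distrib] at hsum2
  have hSplus : ∑ x, max (p x - q x) 0 = T := by linarith
  have hSminus : ∑ x, max (q x - p x) 0 = T := by linarith
  have hαpmf : IsPMF α := by
    constructor
    · intro x
      rw [hα]
      exact div_nonneg (le_max_right _ _) (le_of_lt h0)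
    · rw [hα]
      simp only
      rw [← Finset.sum_div, hSplus, div_self (ne_of_gt h0)]
  have hβpmf : IsPMF β := by
    constructor
    · intro x
      rw [hβ]
      exact div_nonneg (le_max_right _ _) (le_of_lt h0)
    · rw [hβ]
      simp only
      rw [← Finset.sum_div, hSminus, div_self (ne_of_gt h0)]
  set a : ℝ := 1 / (1 + T) with ha'
  set b : ℝ := T / (1 + T) with hb'
  have ha : 0 ≤ a := by
    rw [ha']
    exact le_of_lt (div_pos one_pos h1T)
  have hb : 0 ≤ b := by
    rw [hb']
    exact div_nonneg (le_of_lt h0) (le_of_lt h1T)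
  have hab : a + b = 1 := by
    rw [ha', hb']
    field_simp
  have hkey : ∀ u v : ℝ, a * u + b * (v / T) = (u + v) / (1 + T) := by
    intro u v
    rw [ha', hb']
    field_simp
  have hptwise : (fun x => a * p x + b * β x) = (fun x => a * q x + b * α x) := by
    funext x
    have hmax : q x + max (p x - q x) 0 = p x + max (q x - p x) 0 := by
      rcases le_total (p x) (q x) with h | h
      · rw [max_eq_right (by linarith), max_eq_left (by linarith)]; ring
      · rw [max_eq_left (by linarith), max_eq_right (by linarith)]; ring
    rw [hα, hβ]
    simp only
    rw [hkey, hkey, hmax]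
  have h1 := hconc p β hp hβpmf a b ha hb hab
  have h2 := hac q α hq hαpmf a b ha hb hab
  rw [hptwise] at h1
  have hfα := hbd α hαpmf
  have hfβ := hbd β hβpmf
  have hmain : a * (f p - f q) ≤ b * C + (Real.negMulLog a + Real.negMulLog b) := by
    have hb1 : b * f α ≤ b * C := mul_le_mul_of_nonneg_left hfα.2 hb
    have hb2 : 0 ≤ b * f β := mul_nonneg hb hfβ.1
    nlinarith
  have hmul := mul_le_mul_of_nonneg_left hmain (le_of_lt h1T)
  have hia : (1 + T) * a = 1 := by rw [ha']; field_simp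
  have hib : (1 + T) * b = T := by rw [hb']; field_simp
  have hL : (1 + T) * (a * (f p - f q)) = f p - f q := by
    rw [← mul_assoc, hia, one_mul]
  have hloga : Real.log a = - Real.log (1 + T) := by
    rw [ha', one_div, Real.log_inv]
  have hlogb : Real.log b = Real.log T - Real.log (1 + T) := by
    rw [hb', Real.log_div (ne_of_gt h0) (ne_of_gt h1T)]
  have hH : (1 + T) * (Real.negMulLog a + Real.negMulLog b)
      = Real.negMulLog T + (1 + T) * Real.log (1 + T) := by
    simp only [Real.negMulLog, hloga, hlogb]
    have e1 : (1 + T) * (-a * -Real.log (1 + T)) = ((1 + T) * a) * Real.log (1 + T) := by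
      ring
    have e2 : (1 + T) * (-b * (Real.log T - Real.log (1 + T)))
        = -((1 + T) * b) * Real.log T + ((1 + T) * b) * Real.log (1 + T) := by
      ring
    rw [mul_add, e1, e2, hia, hib]
    ring
  have hlog1T : Real.log (1 + T) ≤ T := by
    have := Real.log_le_sub_one_of_pos h1T
    linarith
  have hfin : (1 + T) * Real.log (1 + T) ≤ 2 * T := by
    have hh := mul_le_mul_of_nonneg_left hlog1T (le_of_lt h1T)
    nlinarith [hh, mul_nonneg hT0 (by linarith : (0:ℝ) ≤ 1 - T)]
  have hR : (1 + T) * (b * C + (Real.negMulLog a + Real.negMulLog b))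
      = T * C + Real.negMulLog T + (1 + T) * Real.log (1 + T) := by
    rw [mul_add, ← mul_assoc, hib, hH]; ring
  rw [hL, hR] at hmul
  linarith

end

end AuxTVMI

/-- **Total variation dominates the difference of mutual informations.**
Let `X, Y` be finite, `μ_n, ν_n` PMFs on `X^n × Y^n` and `ε_n → 0` nonnegative reals with
`‖μ_n − ν_n‖_TV ≤ ε_n` for all `n`.  Then there is `n₀` such that for all `n > n₀`,
`|I_{μ_n}(X^n;Y^n) − I_{ν_n}(X^n;Y^n)| ≤ 2 n ε_n (log|X| + log|Y|) − 3 ε_n log ε_n`. -/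
theorem mutInf_diff_le_of_tv
    {X Y : Type*} [Fintype X] [Fintype Y]
    (μ ν : (n : ℕ) → (Fin n → X) × (Fin n → Y) → ℝ)
    (hμ : ∀ n, IsPMF (μ n)) (hν : ∀ n, IsPMF (ν n))
    (ε : ℕ → ℝ) (hε0 : ∀ n, 0 ≤ ε n)
    (hεlim : Filter.Tendsto ε Filter.atTop (nhds 0))
    (htv : ∀ n, tvDist (μ n) (ν n) ≤ ε n) :
    ∃ n₀ : ℕ, ∀ n > n₀,
      |mutInf (μ n) - mutInf (ν n)| ≤
        2 * (n : ℝ) * ε n * (Real.log (Fintype.card X) + Real.log (Fintype.card Y))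
          - 3 * ε n * Real.log (ε n) := by
  have hev : ∀ᶠ n in Filter.atTop, ε n ≤ Real.exp (-4) :=
    hεlim.eventually (eventually_le_nhds (Real.exp_pos (-4)))
  obtain ⟨n₀, hn₀⟩ := Filter.eventually_atTop.1 hev
  refine ⟨n₀, fun n hn => ?_⟩
  have hp := hμ n
  have hq := hν n
  have he0 : 0 ≤ ε n := hε0 n
  have hee : ε n ≤ Real.exp (-4) := hn₀ n (le_of_lt hn)
  have hee1 : ε n ≤ Real.exp (-1) := le_trans hee (Real.exp_le_exp.2 (by norm_num))
  have hneAB : Nonempty ((Fin n → X) × (Fin n → Y)) := pmf_nonempty hp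
  have hn1 : 0 < n := lt_of_le_of_lt (Nat.zero_le n₀) hn
  have hneX : Nonempty X := ⟨hneAB.some.1 ⟨0, hn1⟩⟩
  have hneY : Nonempty Y := ⟨hneAB.some.2 ⟨0, hn1⟩⟩
  have hlogX : 0 ≤ Real.log (Fintype.card X) :=
    Real.log_nonneg (by exact_mod_cast Fintype.card_pos_iff.2 hneX)
  have hlogY : 0 ≤ Real.log (Fintype.card Y) :=
    Real.log_nonneg (by exact_mod_cast Fintype.card_pos_iff.2 hneY)
  set C : ℝ := Real.log (Fintype.card (Fin n → Y)) with hC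
  have hCval : C = (n : ℝ) * Real.log (Fintype.card Y) := by
    rw [hC, Fintype.card_fun, Fintype.card_fin, Nat.cast_pow, Real.log_pow]
  have hC0 : 0 ≤ C := by
    rw [hCval]; positivity
  have hT : tvDist (μ n) (ν n) ≤ ε n := htv n
  have hT0 : 0 ≤ tvDist (μ n) (ν n) := tv_nonneg _ _
  have hTm : tvDist (margSnd (μ n)) (margSnd (ν n)) ≤ ε n :=
    le_trans (tv_margSnd_le _ _) hT
  have hTm0 : 0 ≤ tvDist (margSnd (μ n)) (margSnd (ν n)) := tv_nonneg _ _
  have hbdE : ∀ r : (Fin n → Y) → ℝ, IsPMF r → 0 ≤ ent r ∧ ent r ≤ C :=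
    fun r hr => ⟨ent_nonneg hr, ent_le_log_card hr⟩
  have hconcE : ∀ r s : (Fin n → Y) → ℝ, IsPMF r → IsPMF s → ∀ a b : ℝ,
      0 ≤ a → 0 ≤ b → a + b = 1 →
      a * ent r + b * ent s ≤ ent (fun x => a * r x + b * s x) :=
    fun r s hr hs a b ha hb hab => ent_mix_ge hr hs ha hb hab
  have hacE : ∀ r s : (Fin n → Y) → ℝ, IsPMF r → IsPMF s → ∀ a b : ℝ,
      0 ≤ a → 0 ≤ b → a + b = 1 →
      ent (fun x => a * r x + b * s x) ≤ a * ent r + b * ent s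
        + (Real.negMulLog a + Real.negMulLog b) :=
    fun r s hr hs a b ha hb hab => ent_mix_le hr hs ha hb hab
  have hE1 := afw_one_sided ent C hC0 hbdE hconcE hacE (margSnd (μ n)) (margSnd (ν n))
    (margSnd_isPMF hp) (margSnd_isPMF hq)
  have hE2 := afw_one_sided ent C hC0 hbdE hconcE hacE (margSnd (ν n)) (margSnd (μ n))
    (margSnd_isPMF hq) (margSnd_isPMF hp)
  rw [tv_comm'] at hE2
  have hbdC : ∀ r : ((Fin n → X) × (Fin n → Y)) → ℝ, IsPMF r →
      0 ≤ condEnt r ∧ condEnt r ≤ C :=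
    fun r hr => ⟨condEnt_nonneg hr, condEnt_le_log hr⟩
  have hconcC : ∀ r s : ((Fin n → X) × (Fin n → Y)) → ℝ, IsPMF r → IsPMF s → ∀ a b : ℝ,
      0 ≤ a → 0 ≤ b → a + b = 1 →
      a * condEnt r + b * condEnt s ≤ condEnt (fun x => a * r x + b * s x) :=
    fun r s hr hs a b ha hb _ => condEnt_concave hr hs ha hb
  have hacC : ∀ r s : ((Fin n → X) × (Fin n → Y)) → ℝ, IsPMF r → IsPMF s → ∀ a b : ℝ,
      0 ≤ a → 0 ≤ b → a + b = 1 →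
      condEnt (fun x => a * r x + b * s x) ≤ a * condEnt r + b * condEnt s
        + (Real.negMulLog a + Real.negMulLog b) :=
    fun r s hr hs a b ha hb hab => condEnt_almost_convex hr hs ha hb hab
  have hD1 := afw_one_sided condEnt C hC0 hbdC hconcC hacC (μ n) (ν n) hp hq
  have hD2 := afw_one_sided condEnt C hC0 hbdC hconcC hacC (ν n) (μ n) hq hp
  rw [tv_comm'] at hD2
  have hmonoE : tvDist (margSnd (μ n)) (margSnd (ν n)) * C
      + Real.negMulLog (tvDist (margSnd (μ n)) (margSnd (ν n)))
      + 2 * tvDist (margSnd (μ n)) (margSnd (ν n))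
      ≤ ε n * C + Real.negMulLog (ε n) + 2 * ε n := by
    have h1 := mul_le_mul_of_nonneg_right hTm hC0
    have h2 := nml_mono hTm0 hTm hee1
    linarith
  have hmonoD : tvDist (μ n) (ν n) * C + Real.negMulLog (tvDist (μ n) (ν n))
      + 2 * tvDist (μ n) (ν n) ≤ ε n * C + Real.negMulLog (ε n) + 2 * ε n := by
    have h1 := mul_le_mul_of_nonneg_right hT hC0
    have h2 := nml_mono hT0 hT hee1
    linarith
  have hid : mutInf (μ n) - mutInf (ν n)
      = (ent (margSnd (μ n)) - ent (margSnd (ν n))) - (condEnt (μ n) - condEnt (ν n)) := by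
    rw [mutInf_eq hp, mutInf_eq hq]
    unfold condEnt
    ring
  have hfour := four_le_nml he0 hee
  have hnml : Real.negMulLog (ε n) = -(ε n * Real.log (ε n)) := by
    rw [Real.negMulLog]; ring
  have hmainX : 0 ≤ 2 * (n:ℝ) * ε n * Real.log (Fintype.card X) := by positivity
  have hprodY : ε n * C = (n : ℝ) * ε n * Real.log (Fintype.card Y) := by
    rw [hCval]; ring
  rw [abs_le]
  constructor
  · rw [hid]
    linarith [hE2, hD1, hmonoE, hmonoD, hfour, hmainX, hprodY]
  · rw [hid]
    linarith [hE1, hD2, hmonoE, hmonoD, hfour, hmainX, hprodY]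
end
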